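/- arXiv:0805.2574 — 8 statements merged into one kernel-verified Lean document; each statement's English description precedes it below -/
import Mathlib

section
/- Let f : G₁ → G₂ be a surjective group homomorphism whose kernel is contained in the center of G₁, and let φ : M → G₂ be a group homomorphism such that the preimage φ⁻¹(Z(G₂)) of the center of G₂ under φ is contained in the center of M. Form the fiber product M̃ = {(m, g) ∈ M × G₁ : φ(m) = f(g)}, a subgroup of M × G₁, and let φ̃ : M̃ → G₁ be the second projection (m, g) ↦ g. Then φ̃⁻¹(Z(G₁)) is central in M̃; that is, every pair (m, g) ∈ M̃ with g ∈ Z(G₁) commutes with every element of M̃. -/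
/-- **Fiber products and central preimages.**
Let `f : G₁ → G₂` be a surjective group homomorphism whose kernel is contained in the
center of `G₁`, and let `φ : M → G₂` be a group homomorphism such that the preimage of
the center of `G₂` under `φ` is contained in the center of `M`.  Form the fiber product
`M̃ = {(m, g) ∈ M × G₁ : φ m = f g}`, and let `φ̃ : M̃ → G₁` be the second projection.
Then `φ̃⁻¹(Z(G₁))` is central in `M̃`: every pair `x = (m, g) ∈ M̃` with `g ∈ Z(G₁)`
commutes with every element `y = (m', g')` of `M̃`. -/
theorem stmt_0 {G₁ G₂ M : Type*} [Group G₁] [Group G₂] [Group M]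
    (f : G₁ →* G₂) (hf : Function.Surjective f)
    (hker : f.ker ≤ Subgroup.center G₁)
    (φ : M →* G₂) (hφ : Subgroup.comap φ (Subgroup.center G₂) ≤ Subgroup.center M)
    (x : M × G₁) (hx : φ x.1 = f x.2) (hxZ : x.2 ∈ Subgroup.center G₁)
    (y : M × G₁) (hy : φ y.1 = f y.2) :
    x * y = y * x := by
  have hcenter : φ x.1 ∈ Subgroup.center G₂ := by
    rw [hx, Subgroup.mem_center_iff]
    intro b
    obtain ⟨a, rfl⟩ := hf b
    rw [← map_mul, ← map_mul, (Subgroup.mem_center_iff.mp hxZ a)]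
  have hx1 : x.1 ∈ Subgroup.center M := hφ hcenter
  have := (Subgroup.mem_center_iff.mp hx1 y.1)
  have h2 := (Subgroup.mem_center_iff.mp hxZ y.2)
  exact Prod.ext (by simpa using this.symm) (by simpa using h2.symm)
end

section
/- Let L be an algebraically closed field of characteristic p > 0, and let A be the subgroup of GL₃(L) consisting of all matrices of the form [[t,0,0],[0,t^p,s],[0,0,1]] with t ∈ Lˣ and s ∈ L (one checks this set is a subgroup, with group law (t,s)·(t′,s′) = (t·t′, t^p·s′ + s)). Then the center of the group A is trivial. -/
/-- **A group of matrices with trivial center.**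
Let `L` be an algebraically closed field of characteristic `p > 0`, and let `A` be the
subgroup of `GL₃(L)` consisting of all matrices `[[t,0,0],[0,t^p,s],[0,0,1]]` with
`t ∈ Lˣ` and `s ∈ L`.  Then the center of the group `A` is trivial: every element of `A`
commuting with all elements of `A` is the identity matrix. -/
theorem stmt_2 {L : Type*} [Field L] [IsAlgClosed L] (p : ℕ) (hp : p ≠ 0) [CharP L p]
    (A : Set (Matrix (Fin 3) (Fin 3) L))
    (hA : A = {M | ∃ t s : L, t ≠ 0 ∧ M = !![t, 0, 0; 0, t ^ p, s; 0, 0, 1]})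
    (z : Matrix (Fin 3) (Fin 3) L) (hz : z ∈ A)
    (hcentral : ∀ w ∈ A, z * w = w * z) :
    z = 1 := by
  subst hA
  obtain ⟨t, s, ht, rfl⟩ := hz
  haveI : NeZero p := ⟨hp⟩
  haveI : Fact p.Prime := ⟨CharP.char_is_prime_of_pos L p |>.out⟩
  haveI := Classical.decEq L
  have hfrob : Function.Injective (fun x : L => x ^ p) := by
    intro a b hab
    exact frobenius_inj L p (by simpa [frobenius_def] using hab)
  -- key equation from (1,2)-entry of commutation
  have key : ∀ c s' : L, c ≠ 0 → t ^ p * s' + s = c ^ p * s + s' := by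
    intro c s' hc
    have h := hcentral !![c, 0, 0; 0, c ^ p, s'; 0, 0, 1] ⟨c, s', hc, rfl⟩
    have := congrFun (congrFun h 1) 2
    simpa [Matrix.mul_apply, Fin.sum_univ_three] using this
  have ht1 : t = 1 := by
    have h := key 1 1 one_ne_zero
    simp at h
    have h2 : t ^ p = (1 : L) ^ p := by rw [one_pow]; linear_combination h
    exact hfrob h2
  have hs0 : s = 0 := by
    obtain ⟨c, hc⟩ := Infinite.exists_notMem_finset ({0, 1} : Finset L)
    simp at hc
    have h := key c 0 hc.1
    have h' : s * (c ^ p - 1) = 0 := by linear_combination -h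
    rcases mul_eq_zero.mp h' with h2 | h2
    · exact h2
    · exact absurd (hfrob (show c ^ p = (1 : L) ^ p by rw [one_pow]; linear_combination h2))
        hc.2
  subst ht1; subst hs0
  ext i j
  fin_cases i <;> fin_cases j <;>
    simp [Matrix.one_apply, Matrix.vecHead, Matrix.vecTail]
end

section
/- Let L be an algebraically closed field of characteristic p > 0, and let A be the subgroup of GL₃(L) consisting of all matrices [[t,0,0],[0,t^p,s],[0,0,1]] with t ∈ Lˣ, s ∈ L. Let E₁₁ and E₂₃ be the matrix units in M₃(L) (with 1 in position (1,1), resp. (2,3), and 0 elsewhere), and let 𝔞 = L·E₁₁ ⊕ L·E₂₃ ⊆ M₃(L). Then 𝔞 is stable under conjugation by every element of A, and the set of elements of 𝔞 fixed under conjugation by every element of A is exactly L·E₁₁ (the scalar multiples of E₁₁). -/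
/-!
Conjugation by `g = [[t,0,0],[0,t^p,s],[0,0,1]]` fixes `E₁₁` and scales `E₂₃` by `t ^ p`, so
`a E₁₁ + b E₂₃` is fixed by all of `A` iff `t ^ p b = b` for every `t ≠ 0`. Since `L` is infinite
and `X ^ p = 1` has finitely many roots, some `t ≠ 0` has `t ^ p ≠ 1`, which forces `b = 0`.
-/

open Matrix

section Conjugation

variable {K : Type*} [Field K]

lemma smul_single_add_smul_single_eq (a b : K) :
    a • single (0 : Fin 3) (0 : Fin 3) (1 : K) + b • single (1 : Fin 3) (2 : Fin 3) (1 : K) =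
      !![a, 0, 0; 0, 0, b; 0, 0, 0] := by
  ext i j
  fin_cases i <;> fin_cases j <;> simp

lemma det_diag_unipotent (t u s : K) :
    (!![t, 0, 0; 0, u, s; 0, 0, 1] : Matrix (Fin 3) (Fin 3) K).det = t * u := by
  simp [det_fin_three]

lemma diag_unipotent_mul_eq (t u s a b : K) :
    !![t, 0, 0; 0, u, s; 0, 0, 1] * !![a, 0, 0; 0, 0, b; 0, 0, 0] =
      !![a, 0, 0; 0, 0, u * b; 0, 0, 0] * !![t, 0, 0; 0, u, s; 0, 0, 1] := by
  ext i j
  fin_cases i <;> fin_cases j <;> simp [mul_comm]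

lemma conj_diag_unipotent {t u : K} (ht : t ≠ 0) (hu : u ≠ 0) (s a b : K) :
    !![t, 0, 0; 0, u, s; 0, 0, 1] *
        (a • single (0 : Fin 3) (0 : Fin 3) (1 : K) + b • single (1 : Fin 3) (2 : Fin 3) 1) *
        (!![t, 0, 0; 0, u, s; 0, 0, 1])⁻¹ =
      a • single (0 : Fin 3) (0 : Fin 3) (1 : K) + (u * b) • single (1 : Fin 3) (2 : Fin 3) 1 := by
  have hdet : IsUnit (!![t, 0, 0; 0, u, s; 0, 0, 1] : Matrix (Fin 3) (Fin 3) K).det := by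
    rw [det_diag_unipotent]
    exact (mul_ne_zero ht hu).isUnit
  rw [smul_single_add_smul_single_eq, smul_single_add_smul_single_eq, diag_unipotent_mul_eq,
    mul_nonsing_inv_cancel_right _ _ hdet]

end Conjugation

lemma exists_ne_zero_pow_ne_one (K : Type*) [Field K] [Infinite K] {n : ℕ} (hn : n ≠ 0) :
    ∃ t : K, t ≠ 0 ∧ t ^ n ≠ 1 := by
  classical
  obtain ⟨t, ht⟩ := Infinite.exists_notMem_finset (insert 0 (Polynomial.nthRootsFinset n (1 : K)))
  rw [Finset.mem_insert, Polynomial.mem_nthRootsFinset (Nat.pos_of_ne_zero hn), not_or] at ht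
  exact ⟨t, ht⟩

theorem stmt_3_general {L : Type*} [Field L] [IsAlgClosed L] (p : ℕ) (hp : p ≠ 0)
    (A : Set (Matrix (Fin 3) (Fin 3) L))
    (hA : A = {M | ∃ t s : L, t ≠ 0 ∧ M = !![t, 0, 0; 0, t ^ p, s; 0, 0, 1]})
    (E₁₁ E₂₃ : Matrix (Fin 3) (Fin 3) L)
    (hE₁₁ : E₁₁ = Matrix.single 0 0 1)
    (hE₂₃ : E₂₃ = Matrix.single 1 2 1)
    (𝔞 : Set (Matrix (Fin 3) (Fin 3) L))
    (h𝔞 : 𝔞 = {M | ∃ a b : L, M = a • E₁₁ + b • E₂₃}) :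
    (∀ g ∈ A, ∀ M ∈ 𝔞, g * M * g⁻¹ ∈ 𝔞) ∧
      ({M ∈ 𝔞 | ∀ g ∈ A, g * M * g⁻¹ = M} = {M | ∃ c : L, M = c • E₁₁}) := by
  subst hA hE₁₁ hE₂₃ h𝔞
  refine ⟨?_, Set.ext fun M ↦ ⟨?_, ?_⟩⟩
  · rintro g ⟨t, s, ht, rfl⟩ M ⟨a, b, rfl⟩
    exact ⟨a, t ^ p * b, conj_diag_unipotent ht (pow_ne_zero p ht) s a b⟩
  · rintro ⟨⟨a, b, rfl⟩, hfix⟩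
    obtain ⟨t, ht, htp⟩ := exists_ne_zero_pow_ne_one L hp
    have hconj := hfix _ ⟨t, 0, ht, rfl⟩
    rw [conj_diag_unipotent ht (pow_ne_zero p ht)] at hconj
    have hb : t ^ p * b = b := by simpa using congrFun (congrFun hconj 1) 2
    have hb0 : b = 0 := by
      have : (t ^ p - 1) * b = 0 := by rw [sub_mul, hb, one_mul, sub_self]
      exact (mul_eq_zero.mp this).resolve_left (sub_ne_zero.mpr htp)
    exact ⟨a, by simp [hb0]⟩
  · rintro ⟨c, rfl⟩
    refine ⟨⟨c, 0, by simp⟩, ?_⟩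
    rintro g ⟨t, s, ht, rfl⟩
    simpa using conj_diag_unipotent ht (pow_ne_zero p ht) s c 0

/-- **Adjoint fixed points in the example group.**
Let `L` be an algebraically closed field of characteristic `p > 0`, let `A ⊆ GL₃(L)` be
the group of matrices `[[t,0,0],[0,t^p,s],[0,0,1]]` (`t ∈ Lˣ`, `s ∈ L`), and let
`𝔞 = L·E₁₁ ⊕ L·E₂₃ ⊆ M₃(L)` where `E₁₁`, `E₂₃` are matrix units.  Then `𝔞` is stable
under conjugation by every element of `A`, and the set of elements of `𝔞` fixed under
conjugation by every element of `A` is exactly `L·E₁₁`. -/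
theorem stmt_3 {L : Type*} [Field L] [IsAlgClosed L] (p : ℕ) (hp : p ≠ 0) [CharP L p]
    (A : Set (Matrix (Fin 3) (Fin 3) L))
    (hA : A = {M | ∃ t s : L, t ≠ 0 ∧ M = !![t, 0, 0; 0, t ^ p, s; 0, 0, 1]})
    (E₁₁ E₂₃ : Matrix (Fin 3) (Fin 3) L)
    (hE₁₁ : E₁₁ = Matrix.single 0 0 1)
    (hE₂₃ : E₂₃ = Matrix.single 1 2 1)
    (𝔞 : Set (Matrix (Fin 3) (Fin 3) L))
    (h𝔞 : 𝔞 = {M | ∃ a b : L, M = a • E₁₁ + b • E₂₃}) :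
    (∀ g ∈ A, ∀ M ∈ 𝔞, g * M * g⁻¹ ∈ 𝔞) ∧
      ({M ∈ 𝔞 | ∀ g ∈ A, g * M * g⁻¹ = M} = {M | ∃ c : L, M = c • E₁₁}) :=
  stmt_3_general p hp A hA E₁₁ E₂₃ hE₁₁ hE₂₃ 𝔞 h𝔞
end

section
/- Let K be a field, n ≥ 1, and let X ∈ M_n(K) be a regular nilpotent matrix, i.e. Xⁿ = 0 and X^{n−1} ≠ 0. Let C = {g ∈ GL_n(K) : gX = Xg}, a subgroup of GL_n(K), and let N = {g ∈ GL_n(K) : gCg⁻¹ = C} be the normalizer of C in GL_n(K). Then every element of N preserves each subspace ker(Xⁱ) ⊆ Kⁿ for 1 ≤ i ≤ n (the unique complete flag stabilized by X); in particular, N is a solvable group. -/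
/-!
Since `1 + X` lies in `C`, every `g ∈ N` conjugates `X` to a regular nilpotent `Y = g X g⁻¹`
commuting with `X`. Using a cyclic vector of `Y`, whatever commutes with `Y` is a polynomial in `Y`;
as `X` is nilpotent, this polynomial has no constant term, so `X = Y T` with `T` commuting with `Y`
and `ker Yⁱ ⊆ ker Xⁱ`, i.e. `g (ker Xⁱ) ⊆ ker Xⁱ`. In the basis `w, X w, …, X ^ (n - 1) w`
given by a cyclic vector `w` of `X`, the space `ker Xⁱ` is spanned by the last `i` vectors, so `N`
becomes a group of lower triangular matrices. That group is solvable: commutators move `g - 1` one subdiagonal further down.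
-/

open Polynomial

/-- The centralizer `C = {g ∈ GLₙ(K) : gX = Xg}` of a matrix `X ∈ Mₙ(K)`,
as a subgroup of the group `GLₙ(K) = (Mₙ(K))ˣ` of invertible matrices. -/
def matrixCentralizer {K : Type*} [Field K] {n : ℕ} (X : Matrix (Fin n) (Fin n) K) :
    Subgroup (Matrix (Fin n) (Fin n) K)ˣ where
  carrier := {g | (g : Matrix (Fin n) (Fin n) K) * X = X * (g : Matrix (Fin n) (Fin n) K)}
  one_mem' := by simp
  mul_mem' := by
    intro a b ha hb
    simp only [Set.mem_setOf_eq, Units.val_mul] at *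
    rw [mul_assoc, hb, ← mul_assoc, ha, mul_assoc]
  inv_mem' := by
    intro a ha
    simp only [Set.mem_setOf_eq] at *
    calc (↑a⁻¹ : Matrix (Fin n) (Fin n) K) * X
        = ↑a⁻¹ * (X * ↑a) * ↑a⁻¹ := by
          rw [mul_assoc, mul_assoc, Units.mul_inv, mul_one]
      _ = ↑a⁻¹ * (↑a * X) * ↑a⁻¹ := by rw [ha]
      _ = X * ↑a⁻¹ := by rw [← mul_assoc, Units.inv_mul, one_mul]

theorem Subgroup.isSolvable_of_le_of_commutator_le {G : Type*} [Group G] {H : Subgroup G}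
    {U : ℕ → Subgroup G} (hH : H ≤ U 0) (hU : ∀ k, ⁅U k, U k⁆ ≤ U (k + 1)) {m : ℕ}
    (hm : U m = ⊥) : Group.IsSolvable H := by
  have hle (k : ℕ) : (derivedSeries H k).map H.subtype ≤ U k := by
    induction k with
    | zero => simpa [derivedSeries_zero, ← MonoidHom.range_eq_map] using hH
    | succ k ih =>
      rw [derivedSeries_succ, Subgroup.map_commutator]
      exact (Subgroup.commutator_mono ih ih).trans (hU k)
  refine ⟨m, ?_⟩
  rw [← Subgroup.map_eq_bot_iff_of_injective _ H.subtype_injective, ← le_bot_iff, ← hm]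
  exact hle m

theorem Polynomial.commute_aeval_self {R A : Type*} [CommSemiring R] [Semiring A] [Algebra R A]
    (x : A) (p : R[X]) : Commute (aeval x p) x := by
  have h := congrArg (aeval x) (X_mul : Polynomial.X * p = p * Polynomial.X)
  simp only [map_mul, aeval_X] at h
  exact h.symm

namespace Matrix

variable {R : Type*} {n : ℕ}

def IsBelowSubdiag [Zero R] (k : ℕ) (A : Matrix (Fin n) (Fin n) R) : Prop :=
  ∀ i j : Fin n, (i : ℕ) < j + k → A i j = 0

namespace IsBelowSubdiag

section Ring

variable [Ring R] {j k : ℕ} {A B : Matrix (Fin n) (Fin n) R}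

theorem mono (hA : IsBelowSubdiag k A) (hjk : j ≤ k) : IsBelowSubdiag j A :=
  fun s t hst => hA s t (by omega)

theorem zero : IsBelowSubdiag k (0 : Matrix (Fin n) (Fin n) R) := fun _ _ _ => rfl

theorem one : IsBelowSubdiag 0 (1 : Matrix (Fin n) (Fin n) R) :=
  fun _ _ h => one_apply_ne (by rintro rfl; omega)

theorem add (hA : IsBelowSubdiag k A) (hB : IsBelowSubdiag k B) : IsBelowSubdiag k (A + B) :=
  fun s t h => by simp [hA s t h, hB s t h]

theorem neg (hA : IsBelowSubdiag k A) : IsBelowSubdiag k (-A) :=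
  fun s t h => by simp [hA s t h]

theorem sub (hA : IsBelowSubdiag k A) (hB : IsBelowSubdiag k B) : IsBelowSubdiag k (A - B) :=
  sub_eq_add_neg A B ▸ hA.add hB.neg

theorem mul (hA : IsBelowSubdiag j A) (hB : IsBelowSubdiag k B) :
    IsBelowSubdiag (j + k) (A * B) := by
  intro s t h
  rw [mul_apply]
  refine Finset.sum_eq_zero fun r _ => ?_
  rcases lt_or_ge (s : ℕ) (r + j) with hr | hr
  · rw [hA s r hr, zero_mul]
  · rw [hB r t (by omega), mul_zero]

theorem mul_apply_self (hA : IsBelowSubdiag 0 A) (hB : IsBelowSubdiag 0 B) (i : Fin n) :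
    (A * B) i i = A i i * B i i := by
  rw [mul_apply]
  refine Finset.sum_eq_single i (fun r _ hri => ?_) (by simp)
  rcases lt_or_gt_of_ne hri with hr | hr
  · rw [hB r i (by simpa using hr), mul_zero]
  · rw [hA i r (by simpa using hr), zero_mul]

theorem eq_zero (hA : IsBelowSubdiag n A) : A = 0 :=
  ext fun s t => hA s t (by omega)

end Ring

theorem mul_sub_mul_comm [CommRing R] {k : ℕ} {A B : Matrix (Fin n) (Fin n) R}
    (hA : IsBelowSubdiag k A) (hB : IsBelowSubdiag k B) :
    IsBelowSubdiag (k + 1) (A * B - B * A) := by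
  rcases Nat.eq_zero_or_pos k with rfl | hk
  · intro s t hst
    rcases lt_or_ge (s : ℕ) t with hlt | hge
    · exact (hA.mul hB).sub (hB.mul hA) s t hlt
    · obtain rfl : s = t := Fin.ext (by omega)
      rw [sub_apply, hA.mul_apply_self hB, hB.mul_apply_self hA, mul_comm, sub_self]
  · exact ((hA.mul hB).sub (hB.mul hA)).mono (by omega)

end IsBelowSubdiag

theorem isBelowSubdiag_zero_iff_blockTriangular [Zero R] {A : Matrix (Fin n) (Fin n) R} :
    IsBelowSubdiag 0 A ↔ A.BlockTriangular OrderDual.toDual :=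
  ⟨fun h _ _ hst => h _ _ hst, fun h _ _ hst => h hst⟩

section Subgroup

variable (R) (n) [CommRing R]

def lowerBandSubgroup (k : ℕ) : Subgroup (Matrix (Fin n) (Fin n) R)ˣ where
  carrier := {g | IsBelowSubdiag k ((g : Matrix (Fin n) (Fin n) R) - 1)}
  one_mem' := by simpa using IsBelowSubdiag.zero
  mul_mem' {a b} ha hb := by
    have key : ((a * b : (Matrix (Fin n) (Fin n) R)ˣ) : Matrix (Fin n) (Fin n) R) - 1 =
        (a - 1) * (b - 1) + (a - 1) + (b - 1) := by
      rw [Units.val_mul]; noncomm_ring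
    rw [Set.mem_ofPred_eq, key]
    exact (((ha.mul hb).mono (by omega)).add ha).add hb
  inv_mem' {a} ha := by
    have key : ((a⁻¹ : (Matrix (Fin n) (Fin n) R)ˣ) : Matrix (Fin n) (Fin n) R) - 1 =
        -((a⁻¹ : (Matrix (Fin n) (Fin n) R)ˣ) * (a - 1)) := by
      rw [mul_sub, mul_one, Units.inv_mul, neg_sub]
    have ha₀ : IsBelowSubdiag 0 (a : Matrix (Fin n) (Fin n) R) := by
      simpa using (ha.mono (Nat.zero_le k)).add IsBelowSubdiag.one
    have ha₀' :
        IsBelowSubdiag 0 ((a⁻¹ : (Matrix (Fin n) (Fin n) R)ˣ) : Matrix (Fin n) (Fin n) R) := by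
      rw [coe_units_inv, isBelowSubdiag_zero_iff_blockTriangular]
      exact blockTriangular_inv_of_blockTriangular (isBelowSubdiag_zero_iff_blockTriangular.1 ha₀)
    rw [Set.mem_ofPred_eq, key]
    simpa using (ha₀'.mul ha).neg

variable {R n}

theorem mem_lowerBandSubgroup {k : ℕ} {g : (Matrix (Fin n) (Fin n) R)ˣ} :
    g ∈ lowerBandSubgroup R n k ↔ IsBelowSubdiag k ((g : Matrix (Fin n) (Fin n) R) - 1) :=
  Iff.rfl

end Subgroup

section Solvable

variable [CommRing R]

theorem lowerBandSubgroup_antitone : Antitone (lowerBandSubgroup R n) :=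
  fun _ _ hjk _ hg => IsBelowSubdiag.mono hg hjk

theorem IsBelowSubdiag.of_mem_lowerBandSubgroup {g : (Matrix (Fin n) (Fin n) R)ˣ}
    (hg : g ∈ lowerBandSubgroup R n 0) : IsBelowSubdiag 0 (g : Matrix (Fin n) (Fin n) R) := by
  simpa using IsBelowSubdiag.add hg IsBelowSubdiag.one

open scoped commutatorElement in
theorem commutatorElement_mem_lowerBandSubgroup {k : ℕ} {a b : (Matrix (Fin n) (Fin n) R)ˣ}
    (ha : a ∈ lowerBandSubgroup R n k) (hb : b ∈ lowerBandSubgroup R n k) :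
    ⁅a, b⁆ ∈ lowerBandSubgroup R n (k + 1) := by
  have inv_mem {g} (hg : g ∈ lowerBandSubgroup R n k) :=
    IsBelowSubdiag.of_mem_lowerBandSubgroup <| inv_mem <| lowerBandSubgroup_antitone k.zero_le hg
  have key : ((⁅a, b⁆ : (Matrix (Fin n) (Fin n) R)ˣ) : Matrix (Fin n) (Fin n) R) - 1 =
      ((a - 1) * (b - 1) - (b - 1) * (a - 1)) *
        ((a⁻¹ : (Matrix (Fin n) (Fin n) R)ˣ) * (b⁻¹ : (Matrix (Fin n) (Fin n) R)ˣ)) := by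
    rw [show ((a - 1) * (b - 1) - (b - 1) * (a - 1) : Matrix (Fin n) (Fin n) R) = a * b - b * a by
      noncomm_ring, sub_mul, mul_assoc (b : Matrix (Fin n) (Fin n) R), Units.mul_inv_cancel_left,
      Units.mul_inv, commutatorElement_def]
    simp only [Units.val_mul, mul_assoc]
  rw [mem_lowerBandSubgroup, key]
  simpa using ((ha.mul_sub_mul_comm hb).mul ((inv_mem ha).mul (inv_mem hb)))

theorem commutator_lowerBandSubgroup_le (k : ℕ) :
    ⁅lowerBandSubgroup R n k, lowerBandSubgroup R n k⁆ ≤ lowerBandSubgroup R n (k + 1) :=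
  Subgroup.commutator_le.2 fun _ ha _ hb => commutatorElement_mem_lowerBandSubgroup ha hb

theorem lowerBandSubgroup_self_eq_bot : lowerBandSubgroup R n n = ⊥ :=
  (Subgroup.eq_bot_iff_forall _).2 fun _ hg => Units.ext <| sub_eq_zero.1 hg.eq_zero

theorem isSolvable_lowerBandSubgroup_zero : Group.IsSolvable (lowerBandSubgroup R n 0) :=
  Subgroup.isSolvable_of_le_of_commutator_le le_rfl commutator_lowerBandSubgroup_le
    lowerBandSubgroup_self_eq_bot

end Solvable

end Matrix

namespace Matrix

theorem exists_mulVec_ne_zero {R ι κ : Type*} [CommSemiring R] [Fintype κ] [DecidableEq κ]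
    {A : Matrix ι κ R} (hA : A ≠ 0) : ∃ w, A *ᵥ w ≠ 0 := by
  by_contra! h
  exact hA (toLin'.injective (LinearMap.ext fun v => by simpa using h v))

variable {K : Type*} [Field K] {n : ℕ} {X : Matrix (Fin n) (Fin n) K} {w : Fin n → K}

theorem coeff_eq_zero_of_pow_mulVec_sum_eq_zero (hXn : X ^ n = 0) (hw : X ^ (n - 1) *ᵥ w ≠ 0)
    {c : Fin n → K} {i : ℕ} (hc : X ^ i *ᵥ ∑ s, c s • (X ^ (s : ℕ) *ᵥ w) = 0) (t : Fin n)
    (ht : t + i < n) : c t = 0 := by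
  induction t using WellFoundedLT.induction with
  | _ t ih =>
  -- applying `X ^ (n - 1 - t)` kills every term but the `t`-th one
  have hsum : X ^ (n - 1 - t) *ᵥ ∑ s, c s • (X ^ (s : ℕ) *ᵥ w) = 0 := by
    rw [show n - 1 - t = (n - 1 - t - i) + i by omega, pow_add, ← mulVec_mulVec, hc, mulVec_zero]
  rw [mulVec_sum, Finset.sum_eq_single t, mulVec_smul, mulVec_mulVec, ← pow_add,
    show n - 1 - t + t = n - 1 by omega] at hsum
  · exact (smul_eq_zero.1 hsum).resolve_right hw
  · intro s _ hst
    rcases lt_or_gt_of_ne hst with hs | hs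
    · rw [ih s hs (by omega), zero_smul, mulVec_zero]
    · rw [mulVec_smul, mulVec_mulVec, ← pow_add, pow_eq_zero_of_le (by omega) hXn, zero_mulVec,
        smul_zero]
  · simp

noncomputable def cyclicBasis (hXn : X ^ n = 0) (hw : X ^ (n - 1) *ᵥ w ≠ 0) :
    Module.Basis (Fin n) K (Fin n → K) :=
  basisOfLinearIndependentOfCardEqFinrank' (fun t : Fin n => X ^ (t : ℕ) *ᵥ w)
    (Fintype.linearIndependent_iff.2 fun _ hc t =>
      coeff_eq_zero_of_pow_mulVec_sum_eq_zero hXn hw (i := 0) (by simpa using hc) t (by omega))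
    (by simp)

@[simp]
theorem cyclicBasis_apply (hXn : X ^ n = 0) (hw : X ^ (n - 1) *ᵥ w ≠ 0) (t : Fin n) :
    cyclicBasis hXn hw t = X ^ (t : ℕ) *ᵥ w := by
  simp [cyclicBasis]

theorem cyclicBasis_repr_eq_zero (hXn : X ^ n = 0) (hw : X ^ (n - 1) *ᵥ w ≠ 0) {v : Fin n → K}
    {i : ℕ} (hv : X ^ i *ᵥ v = 0) {t : Fin n} (ht : t + i < n) :
    (cyclicBasis hXn hw).repr v t = 0 := by
  refine coeff_eq_zero_of_pow_mulVec_sum_eq_zero hXn hw ?_ t ht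
  have hv' := (cyclicBasis hXn hw).sum_repr v
  simp only [cyclicBasis_apply] at hv'
  rwa [hv']

theorem exists_aeval_eq_of_commute (hXn : X ^ n = 0) (hX : X ^ (n - 1) ≠ 0)
    {Z : Matrix (Fin n) (Fin n) K} (hZ : Commute Z X) : ∃ p : K[X], aeval X p = Z := by
  obtain ⟨w, hw⟩ := exists_mulVec_ne_zero hX
  set B := cyclicBasis hXn hw
  set p : K[X] := ∑ t, B.repr (Z *ᵥ w) t • Polynomial.X ^ (t : ℕ)
  have hpw : aeval X p *ᵥ w = Z *ᵥ w := by
    conv_rhs => rw [← B.sum_repr (Z *ᵥ w)]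
    simp [p, B, sum_mulVec, smul_mulVec]
  have shift {A : Matrix (Fin n) (Fin n) K} (hA : Commute A X) (t : ℕ) :
      A *ᵥ (X ^ t *ᵥ w) = X ^ t *ᵥ (A *ᵥ w) := by
    rw [mulVec_mulVec, mulVec_mulVec, (hA.pow_right t).eq]
  refine ⟨p, toLin'.injective <| B.ext fun t => ?_⟩
  rw [toLin'_apply, toLin'_apply, cyclicBasis_apply, shift (commute_aeval_self X p), shift hZ, hpw]

theorem exists_eq_mul_of_commute_of_isNilpotent (hXn : X ^ n = 0) (hX : X ^ (n - 1) ≠ 0)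
    {Z : Matrix (Fin n) (Fin n) K} (hZ : Commute Z X) (hZn : IsNilpotent Z) :
    ∃ T, Commute T X ∧ Z = X * T := by
  obtain ⟨p, rfl⟩ := exists_aeval_eq_of_commute hXn hX hZ
  have : Nontrivial (Matrix (Fin n) (Fin n) K) := nontrivial_of_ne _ _ hX
  have hp : aeval X p = X * aeval X p.divX + algebraMap K _ (p.coeff 0) := by
    have h := congrArg (aeval X) (X_mul_divX_add p)
    rw [map_add, map_mul, aeval_X, aeval_C] at h
    exact h.symm
  have hXT : IsNilpotent (X * aeval X p.divX) :=
    (commute_aeval_self X p.divX).symm.isNilpotent_mul_right ⟨n, hXn⟩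
  have hc : p.coeff 0 = 0 := by
    have hXT' : X * aeval X p.divX = aeval X (Polynomial.X * p.divX) := by simp
    have hsub := ((Commute.all p _).map (aeval X)).isNilpotent_sub hZn (hXT' ▸ hXT)
    rw [← hXT', ← eq_sub_of_add_eq' hp.symm, IsNilpotent.map_iff (algebraMap K _).injective] at hsub
    exact hsub.eq_zero
  exact ⟨aeval X p.divX, commute_aeval_self X _, by rw [hp, hc, map_zero, add_zero]⟩

theorem pow_mulVec_eq_zero_of_commute (hXn : X ^ n = 0) (hX : X ^ (n - 1) ≠ 0)
    {Z : Matrix (Fin n) (Fin n) K} (hZ : Commute Z X) (hZn : IsNilpotent Z) {i : ℕ}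
    {v : Fin n → K} (hv : X ^ i *ᵥ v = 0) : Z ^ i *ᵥ v = 0 := by
  obtain ⟨T, hT, rfl⟩ := exists_eq_mul_of_commute_of_isNilpotent hXn hX hZ hZn
  rw [hT.symm.mul_pow, ← (hT.pow_pow i i).eq, ← mulVec_mulVec, hv, mulVec_zero]

end Matrix

section Normalizer

open Matrix

variable {K : Type*} [Field K] {n : ℕ} {X : Matrix (Fin n) (Fin n) K}
  {g : (Matrix (Fin n) (Fin n) K)ˣ}

theorem commute_conj_of_mem_normalizer (hX : IsNilpotent X)
    (hg : g ∈ Subgroup.normalizer (matrixCentralizer X : Set (Matrix (Fin n) (Fin n) K)ˣ)) :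
    Commute (g * X * (g⁻¹ : (Matrix (Fin n) (Fin n) K)ˣ) : Matrix (Fin n) (Fin n) K) X := by
  have hu : hX.isUnit_one_add.unit ∈ matrixCentralizer X := by
    change (hX.isUnit_one_add.unit : Matrix (Fin n) (Fin n) K) * X = X * _
    rw [IsUnit.unit_spec, add_mul, mul_add, one_mul, mul_one]
  have hconj : g * hX.isUnit_one_add.unit * g⁻¹ ∈ matrixCentralizer X :=
    (Subgroup.mem_normalizer_iff.1 hg _).1 hu
  change ((g * hX.isUnit_one_add.unit * g⁻¹ : (Matrix (Fin n) (Fin n) K)ˣ) :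
    Matrix (Fin n) (Fin n) K) * X = X * _ at hconj
  simp only [Units.val_mul, IsUnit.unit_spec, mul_add, add_mul, mul_one, Units.mul_inv,
    one_mul] at hconj
  exact add_left_cancel hconj

theorem pow_mulVec_mulVec_eq_zero_of_mem_normalizer (hXn : X ^ n = 0) (hX : X ^ (n - 1) ≠ 0)
    (hg : g ∈ Subgroup.normalizer (matrixCentralizer X : Set (Matrix (Fin n) (Fin n) K)ˣ))
    {i : ℕ} {v : Fin n → K} (hv : X ^ i *ᵥ v = 0) :
    X ^ i *ᵥ ((g : Matrix (Fin n) (Fin n) K) *ᵥ v) = 0 := by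
  set Y : Matrix (Fin n) (Fin n) K := g * X * (g⁻¹ : (Matrix (Fin n) (Fin n) K)ˣ)
  have hY (k : ℕ) : Y ^ k = g * X ^ k * (g⁻¹ : (Matrix (Fin n) (Fin n) K)ˣ) := g.conj_pow X k
  have hYzero (k : ℕ) : Y ^ k = 0 ↔ X ^ k = 0 := by
    rw [hY, Units.mul_left_eq_zero, Units.mul_right_eq_zero]
  refine pow_mulVec_eq_zero_of_commute ((hYzero n).2 hXn) (mt (hYzero _).1 hX)
    (commute_conj_of_mem_normalizer ⟨n, hXn⟩ hg).symm ⟨n, hXn⟩ ?_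
  rw [hY, mulVec_mulVec, mul_assoc, Units.inv_mul, mul_one, ← mulVec_mulVec, hv, mulVec_zero]

end Normalizer

section Solvable

open Matrix

variable {K : Type*} [Field K] {n : ℕ}

noncomputable def Module.Basis.unitsConj (b : Module.Basis (Fin n) K (Fin n → K)) :
    (Matrix (Fin n) (Fin n) K)ˣ ≃* (Matrix (Fin n) (Fin n) K)ˣ :=
  Units.mapEquiv (toLinAlgEquiv'.trans (LinearMap.toMatrixAlgEquiv b)).toMulEquiv

theorem Module.Basis.unitsConj_apply (b : Module.Basis (Fin n) K (Fin n → K))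
    (g : (Matrix (Fin n) (Fin n) K)ˣ) (i j : Fin n) :
    (b.unitsConj g : Matrix (Fin n) (Fin n) K) i j =
      b.repr ((g : Matrix (Fin n) (Fin n) K) *ᵥ b j) i := by
  simp [Module.Basis.unitsConj, LinearMap.toMatrixAlgEquiv_apply]

theorem isSolvable_of_forall_pow_mulVec_eq_zero {X : Matrix (Fin n) (Fin n) K} (hXn : X ^ n = 0)
    (hX : X ^ (n - 1) ≠ 0) {H : Subgroup (Matrix (Fin n) (Fin n) K)ˣ}
    (hH : ∀ g ∈ H, ∀ (i : ℕ) (v : Fin n → K), X ^ i *ᵥ v = 0 →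
      X ^ i *ᵥ ((g : Matrix (Fin n) (Fin n) K) *ᵥ v) = 0) :
    Group.IsSolvable H := by
  obtain ⟨w, hw⟩ := exists_mulVec_ne_zero hX
  set B := cyclicBasis hXn hw
  have hmem (g) (hg : g ∈ H) : B.unitsConj g ∈ lowerBandSubgroup K n 0 := by
    intro t s hts
    have hBs : X ^ (n - s) *ᵥ B s = 0 := by
      rw [cyclicBasis_apply, mulVec_mulVec, ← pow_add, Nat.sub_add_cancel s.is_le', hXn,
        zero_mulVec]
    rw [Matrix.sub_apply, one_apply_ne (by rintro rfl; omega), sub_zero,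
      Module.Basis.unitsConj_apply]
    exact cyclicBasis_repr_eq_zero hXn hw (hH g hg _ _ hBs) (by omega)
  have := isSolvable_lowerBandSubgroup_zero (R := K) (n := n)
  exact Group.isSolvable_of_isSolvable_injective
    (f := (B.unitsConj.toMonoidHom.comp H.subtype).codRestrict _ fun g => hmem g g.2)
    fun _ _ hab => Subtype.ext (B.unitsConj.injective (congrArg Subtype.val hab))

end Solvable

theorem stmt_5_general {K : Type*} [Field K] (n : ℕ)
    (X : Matrix (Fin n) (Fin n) K) (hXn : X ^ n = 0) (hXreg : X ^ (n - 1) ≠ 0) :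
    (∀ g ∈ (Subgroup.normalizer (matrixCentralizer X : Set (Matrix (Fin n) (Fin n) K)ˣ)), ∀ i : ℕ, 1 ≤ i → i ≤ n →
        ∀ v : Fin n → K, (X ^ i).mulVec v = 0 →
          (X ^ i).mulVec ((g : Matrix (Fin n) (Fin n) K).mulVec v) = 0) ∧
      IsSolvable ↥(Subgroup.normalizer (matrixCentralizer X : Set (Matrix (Fin n) (Fin n) K)ˣ)) := by
  have hflag : ∀ g ∈ Subgroup.normalizer (matrixCentralizer X : Set (Matrix (Fin n) (Fin n) K)ˣ),
      ∀ (i : ℕ) (v : Fin n → K), (X ^ i).mulVec v = 0 →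
        (X ^ i).mulVec ((g : Matrix (Fin n) (Fin n) K).mulVec v) = 0 :=
    fun _ hg _ _ hv => pow_mulVec_mulVec_eq_zero_of_mem_normalizer hXn hXreg hg hv
  exact ⟨fun g hg i _ _ v hv => hflag g hg i v hv,
    isSolvable_of_forall_pow_mulVec_eq_zero hXn hXreg hflag⟩

/-- **The normalizer of the centralizer of a regular nilpotent matrix is solvable.**
Let `X ∈ Mₙ(K)` be regular nilpotent (`Xⁿ = 0`, `X^(n-1) ≠ 0`), let
`C = {g ∈ GLₙ(K) : gX = Xg}` and let `N` be the normalizer of `C` in `GLₙ(K)`.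
Then every element of `N` preserves each subspace `ker(Xⁱ) ⊆ Kⁿ` for `1 ≤ i ≤ n`;
in particular `N` is solvable. -/
theorem stmt_5 {K : Type*} [Field K] (n : ℕ) (hn : 1 ≤ n)
    (X : Matrix (Fin n) (Fin n) K) (hXn : X ^ n = 0) (hXreg : X ^ (n - 1) ≠ 0) :
    (∀ g ∈ (Subgroup.normalizer (matrixCentralizer X : Set (Matrix (Fin n) (Fin n) K)ˣ)), ∀ i : ℕ, 1 ≤ i → i ≤ n →
        ∀ v : Fin n → K, (X ^ i).mulVec v = 0 →
          (X ^ i).mulVec ((g : Matrix (Fin n) (Fin n) K).mulVec v) = 0) ∧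
      IsSolvable ↥(Subgroup.normalizer (matrixCentralizer X : Set (Matrix (Fin n) (Fin n) K)ˣ)) :=
  stmt_5_general n X hXn hXreg
end

section
/- Let K be a field, n ≥ 1, and let X ∈ M_n(K) be a regular nilpotent matrix, i.e. Xⁿ = 0 and X^{n−1} ≠ 0. Let C = {g ∈ GL_n(K) : gX = Xg} and let N = {g ∈ GL_n(K) : gCg⁻¹ = C} be the normalizer of C in GL_n(K). Then the conjugation orbit of X under N equals the set of regular nilpotent elements of the span of X, X², …, X^{n−1}; that is, {gXg⁻¹ : g ∈ N} = {c₁X + c₂X² + ⋯ + c_{n−1}X^{n−1} : c_i ∈ K, c₁ ≠ 0}. -/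
open Finset

section Algebra

variable {R A : Type*} [CommSemiring R] [Semiring A] [Algebra R A]

theorem Commute.sum_smul_pow_right {a x : A} (h : Commute a x) (s : Finset ℕ) (c : ℕ → R)
    (e : ℕ → ℕ) : Commute a (∑ i ∈ s, c i • x ^ e i) :=
  Commute.sum_right _ _ _ fun i _ => (h.pow_right (e i)).smul_right (c i)

theorem sum_Icc_smul_pow_eq_mul (x : A) (c : ℕ → R) (m : ℕ) :
    ∑ i ∈ Icc 1 m, c i • x ^ i = x * ∑ i ∈ Icc 1 m, c i • x ^ (i - 1) := by
  rw [mul_sum]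
  refine sum_congr rfl fun i hi => ?_
  rw [mul_smul_comm, ← pow_succ', Nat.sub_add_cancel (mem_Icc.mp hi).1]

theorem sum_Icc_smul_pow_pow_eq_zero {x : A} {n : ℕ} (hx : x ^ n = 0) (c : ℕ → R) (m : ℕ) :
    (∑ i ∈ Icc 1 m, c i • x ^ i) ^ n = 0 := by
  rw [sum_Icc_smul_pow_eq_mul, ((Commute.refl x).sum_smul_pow_right _ _ _).mul_pow, hx, zero_mul]

theorem sum_Icc_smul_pow_pow_pred {x : A} {n : ℕ} (hx : x ^ n = 0) (hn : 2 ≤ n) (c : ℕ → R) :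
    (∑ i ∈ Icc 1 (n - 1), c i • x ^ i) ^ (n - 1) = c 1 ^ (n - 1) • x ^ (n - 1) := by
  set u := ∑ i ∈ Icc 1 (n - 1), c i • x ^ (i - 1)
  have hxu : x ^ (n - 1) * u = c 1 • x ^ (n - 1) := by
    rw [mul_sum, sum_eq_single_of_mem 1 (mem_Icc.mpr ⟨le_rfl, by omega⟩) fun i hi hi1 => ?_]
    · simp
    have hi_pos := (mem_Icc.mp hi).1
    rw [mul_smul_comm, ← pow_add, pow_eq_zero_of_le (by omega) hx, smul_zero]
  have hxu_pow : ∀ k, x ^ (n - 1) * u ^ k = c 1 ^ k • x ^ (n - 1) := by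
    intro k
    induction k with
    | zero => simp
    | succ k ih => rw [pow_succ, ← mul_assoc, ih, smul_mul_assoc, hxu, smul_smul, pow_succ]
  rw [sum_Icc_smul_pow_eq_mul, ((Commute.refl x).sum_smul_pow_right _ _ _).mul_pow, hxu_pow]

end Algebra

theorem Units.commute_conj_iff {M : Type*} [Monoid M] (u : Mˣ) (a b : M) :
    Commute (u.val * a * u⁻¹.val) (u.val * b * u⁻¹.val) ↔ Commute a b := by
  simp only [Commute, SemiconjBy, mul_assoc, Units.inv_mul_cancel_left, Units.mul_right_inj]
  simp only [← mul_assoc, Units.mul_left_inj]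

namespace Matrix

variable {K : Type*} [Field K] {n : ℕ}

def IsRegularNilpotent (X : Matrix (Fin n) (Fin n) K) : Prop :=
  X ^ n = 0 ∧ X ^ (n - 1) ≠ 0

variable {X M P : Matrix (Fin n) (Fin n) K} {v : Fin n → K}

theorem linearIndependent_pow_mulVec (hXn : X ^ n = 0) (hv : X ^ (n - 1) *ᵥ v ≠ 0) :
    LinearIndependent K fun i : Fin n => X ^ (i : ℕ) *ᵥ v := by
  rw [Fintype.linearIndependent_iff]
  intro a ha
  by_contra! hne
  obtain ⟨k, hk, hmin⟩ := WellFounded.has_min wellFounded_lt {i | a i ≠ 0} hne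
  -- applying `X ^ (n - 1 - k)` kills every term but the `k`-th
  have hsum : ∑ i, a i • (X ^ (n - 1 - k + i) *ᵥ v) = 0 := by
    simpa [mulVec_sum, mulVec_smul, mulVec_mulVec, ← pow_add] using
      congrArg (X ^ (n - 1 - k) *ᵥ ·) ha
  rw [sum_eq_single k (fun i _ hik => ?_) (by simp), Nat.sub_add_cancel (by omega)] at hsum
  · exact hv ((smul_eq_zero.mp hsum).resolve_left hk)
  by_cases hai : a i = 0
  · rw [hai, zero_smul]
  have hki : (k : ℕ) < i := lt_of_le_of_ne (not_lt.mp (hmin i hai)) (Fin.val_ne_of_ne hik.symm)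
  rw [pow_eq_zero_of_le (by omega) hXn, zero_mulVec, smul_zero]

theorem exists_mulVec_ne_zero_s6 (hM : M ≠ 0) : ∃ v : Fin n → K, M *ᵥ v ≠ 0 := by
  contrapose! hM
  exact toLin'.injective <| LinearMap.ext fun v => by simp [hM v]

noncomputable def basisPowMulVec (hXn : X ^ n = 0) (hv : X ^ (n - 1) *ᵥ v ≠ 0) :
    Module.Basis (Fin n) K (Fin n → K) :=
  basisOfLinearIndependentOfCardEqFinrank' _ (linearIndependent_pow_mulVec hXn hv) (by simp)

@[simp]
theorem coe_basisPowMulVec (hXn : X ^ n = 0) (hv : X ^ (n - 1) *ᵥ v ≠ 0) :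
    ⇑(basisPowMulVec hXn hv) = fun i : Fin n => X ^ (i : ℕ) *ᵥ v :=
  coe_basisOfLinearIndependentOfCardEqFinrank' ..

theorem eq_of_commute_of_mulVec_eq (hXn : X ^ n = 0) (hv : X ^ (n - 1) *ᵥ v ≠ 0)
    (hM : Commute M X) (hP : Commute P X) (h : M *ᵥ v = P *ᵥ v) : M = P := by
  refine toLin'.injective ((basisPowMulVec hXn hv).ext fun i => ?_)
  simp only [toLin'_apply, coe_basisPowMulVec]
  rw [mulVec_mulVec, (hM.pow_right i).eq, ← mulVec_mulVec, h, mulVec_mulVec,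
    ← (hP.pow_right i).eq, ← mulVec_mulVec]

namespace IsRegularNilpotent

theorem pos (hX : IsRegularNilpotent X) : 0 < n := by
  refine Nat.pos_of_ne_zero fun h => hX.2 ?_
  subst h
  exact Subsingleton.elim _ _

theorem isNilpotent (hX : IsRegularNilpotent X) : IsNilpotent X := ⟨n, hX.1⟩

theorem conj (hX : IsRegularNilpotent X) (g : (Matrix (Fin n) (Fin n) K)ˣ) :
    IsRegularNilpotent (g.val * X * g⁻¹.val) := by
  simpa only [IsRegularNilpotent, ne_eq, Units.conj_pow, Units.mul_right_eq_zero,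
    Units.mul_left_eq_zero] using hX

theorem exists_eq_sum_range_smul_pow_of_commute (hX : IsRegularNilpotent X) (hM : Commute M X) :
    ∃ c : ℕ → K, M = ∑ i ∈ range n, c i • X ^ i := by
  obtain ⟨v, hv⟩ := exists_mulVec_ne_zero_s6 hX.2
  let b := basisPowMulVec hX.1 hv
  refine ⟨fun i => if h : i < n then b.repr (M *ᵥ v) ⟨i, h⟩ else 0,
    eq_of_commute_of_mulVec_eq hX.1 hv hM ((Commute.refl X).sum_smul_pow_right _ _ _).symm ?_⟩
  conv_lhs => rw [← b.sum_repr (M *ᵥ v)]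
  rw [sum_mulVec, ← Fin.sum_univ_eq_sum_range]
  simp [b, smul_mulVec]

theorem commute_of_commute (hX : IsRegularNilpotent X) (hM : Commute M X) (hP : Commute P X) :
    Commute M P := by
  obtain ⟨c, rfl⟩ := hX.exists_eq_sum_range_smul_pow_of_commute hM
  exact (hP.sum_smul_pow_right _ _ _).symm

theorem commute_iff_commute {Y : Matrix (Fin n) (Fin n) K} (hX : IsRegularNilpotent X)
    (hY : IsRegularNilpotent Y) (hXY : Commute X Y) : Commute M X ↔ Commute M Y :=
  ⟨fun h => hX.commute_of_commute h hXY.symm, fun h => hY.commute_of_commute h hXY⟩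

theorem exists_eq_sum_Icc_smul_pow_of_commute_of_isNilpotent (hX : IsRegularNilpotent X)
    (hM : Commute M X) (hMnil : IsNilpotent M) : ∃ c : ℕ → K, M = ∑ i ∈ Icc 1 (n - 1), c i • X ^ i := by
  obtain ⟨c, hc⟩ := hX.exists_eq_sum_range_smul_pow_of_commute hM
  refine ⟨c, ?_⟩
  set N := ∑ i ∈ Icc 1 (n - 1), c i • X ^ i
  have hMN : M = algebraMap K _ (c 0) + N := by
    have hrange : range n = insert 0 (Icc 1 (n - 1)) := by
      ext i
      simp only [mem_range, mem_insert, mem_Icc]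
      have := hX.pos
      omega
    rw [hc, hrange, sum_insert (by simp), pow_zero, Algebra.algebraMap_eq_smul_one]
  have hN : IsNilpotent N := ⟨n, sum_Icc_smul_pow_pow_eq_zero hX.1 c _⟩
  have hMN_comm : Commute M N :=
    hX.commute_of_commute hM ((Commute.refl X).sum_smul_pow_right _ _ _).symm
  have hc0 : IsNilpotent (algebraMap K (Matrix (Fin n) (Fin n) K) (c 0)) := by
    rw [eq_sub_of_add_eq hMN.symm]
    exact hMN_comm.isNilpotent_sub hMnil hN
  have : NeZero n := ⟨hX.pos.ne'⟩
  rw [IsNilpotent.map_iff (algebraMap K _).injective, isNilpotent_iff_eq_zero] at hc0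
  rw [hMN, hc0, map_zero, zero_add]

theorem sum_Icc_smul_pow (hX : IsRegularNilpotent X) (hn : 2 ≤ n) {c : ℕ → K} (hc : c 1 ≠ 0) :
    IsRegularNilpotent (∑ i ∈ Icc 1 (n - 1), c i • X ^ i) := by
  refine ⟨sum_Icc_smul_pow_pow_eq_zero hX.1 c _, ?_⟩
  rw [sum_Icc_smul_pow_pow_pred hX.1 hn]
  exact smul_ne_zero (pow_ne_zero _ hc) hX.2

theorem exists_conj_eq {Y : Matrix (Fin n) (Fin n) K} (hX : IsRegularNilpotent X)
    (hY : IsRegularNilpotent Y) : ∃ g : (Matrix (Fin n) (Fin n) K)ˣ, Y = g.val * X * g⁻¹.val := by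
  obtain ⟨v, hv⟩ := exists_mulVec_ne_zero_s6 hX.2
  obtain ⟨w, hw⟩ := exists_mulVec_ne_zero_s6 hY.2
  let e := (basisPowMulVec hX.1 hv).equiv (basisPowMulVec hY.1 hw) (Equiv.refl _)
  have he : ∀ k, e (X ^ k *ᵥ v) = Y ^ k *ᵥ w := by
    intro k
    rcases lt_or_ge k n with hk | hk
    · simpa using
        (basisPowMulVec hX.1 hv).equiv_apply ⟨k, hk⟩ (basisPowMulVec hY.1 hw) (Equiv.refl _)
    · rw [pow_eq_zero_of_le hk hX.1, pow_eq_zero_of_le hk hY.1, zero_mulVec, zero_mulVec, map_zero]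
  let g := GeneralLinearGroup.toLin.symm
    ((LinearMap.GeneralLinearGroup.generalLinearEquiv K _).symm e)
  have hg : ∀ u, g.val *ᵥ u = e u := fun u => by
    simp [g, GeneralLinearGroup.toLin, Units.mapEquiv_symm, LinearMap.toMatrixAlgEquiv',
      LinearMap.GeneralLinearGroup.generalLinearEquiv, ← toLin'_apply]
  refine ⟨g, (Units.eq_mul_inv_iff_mul_eq g).mpr <| toLin'.injective <|
    (basisPowMulVec hX.1 hv).ext fun i => ?_⟩
  simp only [toLin'_apply, coe_basisPowMulVec, ← mulVec_mulVec, hg]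
  rw [he, mulVec_mulVec, ← pow_succ', mulVec_mulVec, ← pow_succ', he]

end IsRegularNilpotent

end Matrix

section Normalizer

variable {K : Type*} [Field K] {n : ℕ} {X : Matrix (Fin n) (Fin n) K}
  {g : (Matrix (Fin n) (Fin n) K)ˣ}

theorem mem_matrixCentralizer_iff : g ∈ matrixCentralizer X ↔ Commute g.val X :=
  Iff.rfl

theorem commute_conj_of_mem_normalizer_matrixCentralizer (hX : IsNilpotent X)
    (hg : g ∈ Subgroup.normalizer (matrixCentralizer X : Set (Matrix (Fin n) (Fin n) K)ˣ)) :
    Commute (g.val * X * g⁻¹.val) X := by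
  have hu := hX.isUnit_one_add
  have hmem : hu.unit ∈ matrixCentralizer X :=
    mem_matrixCentralizer_iff.mpr ((Commute.one_left X).add_left (Commute.refl X))
  have hconj := mem_matrixCentralizer_iff.mp ((Subgroup.mem_normalizer_iff.mp hg hu.unit).mp hmem)
  rw [Units.val_mul, Units.val_mul, IsUnit.unit_spec, mul_add, add_mul, mul_one,
    Units.mul_inv] at hconj
  simpa using hconj.sub_left (Commute.one_left X)

theorem mem_normalizer_matrixCentralizer_of_forall_commute_iff
    (h : ∀ M, Commute M X ↔ Commute M (g.val * X * g⁻¹.val)) :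
    g ∈ Subgroup.normalizer (matrixCentralizer X : Set (Matrix (Fin n) (Fin n) K)ˣ) := by
  refine Subgroup.mem_normalizer_iff.mpr fun k => ?_
  rw [mem_matrixCentralizer_iff, mem_matrixCentralizer_iff, Units.val_mul, Units.val_mul,
    h (g.val * k * g⁻¹.val), Units.commute_conj_iff]

end Normalizer

theorem stmt_6_general {K : Type*} [Field K] (n : ℕ)
    (X : Matrix (Fin n) (Fin n) K) (hXn : X ^ n = 0) (hXreg : X ^ (n - 1) ≠ 0) :
    {Y : Matrix (Fin n) (Fin n) K | ∃ g ∈ Subgroup.normalizer (matrixCentralizer X : Set (Matrix (Fin n) (Fin n) K)ˣ),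
        Y = (g : Matrix (Fin n) (Fin n) K) * X * ((g⁻¹ : (Matrix (Fin n) (Fin n) K)ˣ) :
          Matrix (Fin n) (Fin n) K)} =
      {Y : Matrix (Fin n) (Fin n) K | ∃ c : ℕ → K, c 1 ≠ 0 ∧
        Y = ∑ i ∈ Finset.Icc 1 (n - 1), c i • X ^ i} := by
  have hX : X.IsRegularNilpotent := ⟨hXn, hXreg⟩
  obtain rfl | hn2 : n = 1 ∨ 2 ≤ n := by have := hX.pos; omega
  · have hX0 : X = 0 := by simpa using hXn
    ext Y
    simpa [hX0] using fun _ => iff_of_true ⟨1, Subgroup.one_mem _⟩ ⟨1, one_ne_zero⟩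
  ext Y
  constructor
  · rintro ⟨g, hg, rfl⟩
    have hY := hX.conj g
    obtain ⟨c, hc⟩ := hX.exists_eq_sum_Icc_smul_pow_of_commute_of_isNilpotent
      (commute_conj_of_mem_normalizer_matrixCentralizer hX.isNilpotent hg) hY.isNilpotent
    refine ⟨c, fun hc1 => hY.2 ?_, hc⟩
    rw [hc, sum_Icc_smul_pow_pow_pred hXn hn2, hc1, zero_pow (by omega), zero_smul]
  · rintro ⟨c, hc1, rfl⟩
    have hY := hX.sum_Icc_smul_pow hn2 hc1
    obtain ⟨g, hg⟩ := hX.exists_conj_eq hY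
    refine ⟨g, mem_normalizer_matrixCentralizer_of_forall_commute_iff fun M => ?_, hg⟩
    rw [← hg]
    exact hX.commute_iff_commute hY ((Commute.refl X).sum_smul_pow_right _ _ _)

/-- **The orbit of a regular nilpotent matrix under the normalizer of its centralizer.**
Let `X ∈ Mₙ(K)` be regular nilpotent (`Xⁿ = 0`, `X^(n-1) ≠ 0`), let
`C = {g ∈ GLₙ(K) : gX = Xg}` and let `N` be the normalizer of `C` in `GLₙ(K)`.
Then the conjugation orbit `{gXg⁻¹ : g ∈ N}` equals the set of regular nilpotent
elements of the span of `X, X², …, X^(n-1)`, i.e.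
`{c₁X + c₂X² + ⋯ + c_{n-1}X^(n-1) : cᵢ ∈ K, c₁ ≠ 0}`. -/
theorem stmt_6 {K : Type*} [Field K] (n : ℕ) (hn : 1 ≤ n)
    (X : Matrix (Fin n) (Fin n) K) (hXn : X ^ n = 0) (hXreg : X ^ (n - 1) ≠ 0) :
    {Y : Matrix (Fin n) (Fin n) K | ∃ g ∈ Subgroup.normalizer (matrixCentralizer X : Set (Matrix (Fin n) (Fin n) K)ˣ),
        Y = (g : Matrix (Fin n) (Fin n) K) * X * ((g⁻¹ : (Matrix (Fin n) (Fin n) K)ˣ) :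
          Matrix (Fin n) (Fin n) K)} =
      {Y : Matrix (Fin n) (Fin n) K | ∃ c : ℕ → K, c 1 ≠ 0 ∧
        Y = ∑ i ∈ Finset.Icc 1 (n - 1), c i • X ^ i} :=
  stmt_6_general n X hXn hXreg
end

section
/- Let K be a field, n ≥ 1, and let X ∈ M_n(K) be a regular nilpotent matrix, i.e. Xⁿ = 0 and X^{n−1} ≠ 0. Let C = {g ∈ GL_n(K) : gX = Xg}. Then an element g ∈ GL_n(K) normalizes C (i.e. gCg⁻¹ = C) if and only if gXg⁻¹ = c₁X + c₂X² + ⋯ + c_{n−1}X^{n−1} for some c_i ∈ K with c₁ ≠ 0. -/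
open Finset

theorem sum_smul_pow_mem_adjoin {K R : Type*} [CommSemiring K] [Semiring R] [Algebra K R]
    (s : Finset ℕ) (c : ℕ → K) (x : R) :
    ∑ i ∈ s, c i • x ^ i ∈ Algebra.adjoin K {x} :=
  Subalgebra.sum_mem _ fun i _ =>
    Subalgebra.smul_mem _ (Subalgebra.pow_mem _ (Algebra.self_mem_adjoin_singleton K x) i) _

namespace Module.End

variable {K V : Type*} [Field K] [AddCommGroup V] [Module K V] {f : Module.End K V}

theorem linearIndependent_pow_apply :
    ∀ {n : ℕ} {v : V}, (f ^ n) v = 0 → (f ^ (n - 1)) v ≠ 0 →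
      LinearIndependent K fun i : Fin n => (f ^ (i : ℕ)) v
  | 0, _, _, _ => linearIndependent_empty_type
  | 1, _, _, hv => linearIndependent_unique_iff.mpr hv
  | n + 2, v, hfv, hv => by
    have htail : LinearIndependent K fun i : Fin (n + 1) => (f ^ (i : ℕ)) (f v) :=
      linearIndependent_pow_apply (by rwa [← mul_apply, ← pow_succ])
        (by rwa [← mul_apply, ← pow_succ])
    rw [linearIndependent_finSucc]
    refine ⟨?_, fun hmem => ?_⟩
    · convert htail using 2 with i
      rw [Fin.tail, Fin.val_succ, pow_succ, mul_apply]
    have hker : Submodule.span K (Set.range (Fin.tail fun i : Fin (n + 2) => (f ^ (i : ℕ)) v))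
        ≤ LinearMap.ker (f ^ (n + 1)) := by
      rw [Submodule.span_le]
      rintro _ ⟨i, rfl⟩
      rw [SetLike.mem_coe, LinearMap.mem_ker, Fin.tail, ← mul_apply, ← pow_add, Fin.val_succ,
        show n + 1 + (i + 1) = i + (n + 2) by omega, pow_add, mul_apply, hfv, map_zero]
    exact hv (hker hmem)

theorem exists_eq_sum_smul_pow_of_commute [FiniteDimensional K V] {n : ℕ}
    (hn : Module.finrank K V = n) (hfn : f ^ n = 0) (hf : f ^ (n - 1) ≠ 0)
    {a : Module.End K V} (ha : Commute a f) :
    ∃ c : ℕ → K, a = ∑ i ∈ range n, c i • f ^ i := by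
  obtain ⟨v, hv⟩ := DFunLike.ne_iff.mp hf
  let b : Fin n → V := fun i => (f ^ (i : ℕ)) v
  have hspan : Submodule.span K (Set.range b) = ⊤ :=
    (linearIndependent_pow_apply (by simp [hfn]) hv).span_eq_top_of_card_eq_finrank'
      (by simp [hn])
  obtain ⟨r, hr⟩ := (Submodule.mem_span_range_iff_exists_fun K).mp
    (hspan ▸ Submodule.mem_top : a v ∈ Submodule.span K (Set.range b))
  set c : ℕ → K := fun i => if h : i < n then r ⟨i, h⟩ else 0
  have hp : ∑ i ∈ range n, c i • f ^ i = ∑ i : Fin n, r i • f ^ (i : ℕ) := by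
    rw [← Fin.sum_univ_eq_sum_range]
    simp [c]
  have hcomm : Commute (∑ i ∈ range n, c i • f ^ i) f :=
    (Algebra.commute_of_mem_adjoin_self (sum_smul_pow_mem_adjoin _ _ _)).symm
  refine ⟨c, LinearMap.ext_on_range hspan fun i => ?_⟩
  calc a ((f ^ (i : ℕ)) v) = (f ^ (i : ℕ)) (a v) := by
        rw [← mul_apply, (ha.pow_right i).eq, mul_apply]
    _ = (f ^ (i : ℕ)) ((∑ i ∈ range n, c i • f ^ i) v) := by
        simp [hp, ← hr, b, LinearMap.sum_apply]
    _ = (∑ i ∈ range n, c i • f ^ i) ((f ^ (i : ℕ)) v) := by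
        rw [← mul_apply, ← (hcomm.pow_right i).eq, mul_apply]

end Module.End

theorem Matrix.exists_eq_sum_smul_pow_of_commute {K ι : Type*} [Field K] [Fintype ι]
    [DecidableEq ι] {n : ℕ} (hn : Fintype.card ι = n) {X A : Matrix ι ι K} (hXn : X ^ n = 0)
    (hX : X ^ (n - 1) ≠ 0) (hA : Commute A X) :
    ∃ c : ℕ → K, A = ∑ i ∈ range n, c i • X ^ i := by
  let φ := Matrix.toLinAlgEquiv' (R := K) (n := ι)
  obtain ⟨c, hc⟩ := Module.End.exists_eq_sum_smul_pow_of_commute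
    ((Module.finrank_fintype_fun_eq_card K).trans hn) (f := φ X)
    (by rw [← map_pow, hXn, map_zero]) (by rwa [← map_pow, map_ne_zero_iff _ φ.injective])
    (hA.map φ)
  exact ⟨c, φ.injective (by simpa using hc)⟩

section PowerSums

variable {K R : Type*} [Field K] [Ring R] [Algebra K R] {x y : R} {n : ℕ} {c : ℕ → K}

theorem ne_zero_of_pow_eq_zero_of_pow_pred_ne_zero (hxn : x ^ n = 0) (hx : x ^ (n - 1) ≠ 0) :
    n ≠ 0 := by
  rintro rfl
  exact hx hxn

theorem coeff_zero_eq_zero_of_isNilpotent (hxn : x ^ n = 0) (hx : x ^ (n - 1) ≠ 0)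
    (hy : IsNilpotent (∑ i ∈ range n, c i • x ^ i)) : c 0 = 0 := by
  obtain ⟨m, rfl⟩ :=
    Nat.exists_eq_succ_of_ne_zero (ne_zero_of_pow_eq_zero_of_pow_pred_ne_zero hxn hx)
  rw [Nat.succ_sub_one] at hx
  have hsemi :
      SemiconjBy (x ^ m) (∑ i ∈ range (m + 1), c i • x ^ i) (algebraMap K R (c 0)) := by
    rw [SemiconjBy, sum_range_succ', mul_add, mul_sum, sum_eq_zero, zero_add, pow_zero,
      mul_smul_comm, mul_one, Algebra.smul_def]
    intro i _
    rw [mul_smul_comm, ← pow_add, pow_eq_zero_of_le (by omega) hxn, smul_zero]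
  obtain ⟨k, hk⟩ := hy
  have := (hsemi.pow_right k).eq
  rw [hk, mul_zero, ← map_pow, ← Algebra.smul_def] at this
  exact IsNilpotent.eq_zero ⟨k, (smul_eq_zero.mp this.symm).resolve_right hx⟩

theorem coeff_one_ne_zero_of_pow_ne_zero (hxn : x ^ n = 0) (hn : 2 ≤ n)
    (hy : (∑ i ∈ Icc 1 (n - 1), c i • x ^ i) ^ (n - 1) ≠ 0) : c 1 ≠ 0 := by
  intro hc1
  have hfactor : ∑ i ∈ Icc 1 (n - 1), c i • x ^ i =
      x ^ 2 * ∑ i ∈ Icc 1 (n - 1), c i • x ^ (i - 2) := by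
    rw [mul_sum]
    refine sum_congr rfl fun i hi => ?_
    obtain rfl | hi2 : i = 1 ∨ 2 ≤ i := by grind
    · simp [hc1]
    · rw [mul_smul_comm, ← pow_add, Nat.add_sub_cancel' hi2]
  have hcomm : Commute (x ^ 2) (∑ i ∈ Icc 1 (n - 1), c i • x ^ (i - 2)) :=
    Commute.sum_right _ _ _ fun i _ => ((Commute.refl x).pow_pow 2 (i - 2)).smul_right (c i)
  apply hy
  rw [hfactor, hcomm.mul_pow, ← pow_mul, pow_eq_zero_of_le (by omega) hxn, zero_mul]

theorem exists_coeff_one_ne_zero_of_eq_sum (hxn : x ^ n = 0) (hx : x ^ (n - 1) ≠ 0)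
    (hyn : y ^ n = 0) (hy : y ^ (n - 1) ≠ 0) (hyc : y = ∑ i ∈ range n, c i • x ^ i) :
    ∃ c : ℕ → K, c 1 ≠ 0 ∧ y = ∑ i ∈ Icc 1 (n - 1), c i • x ^ i := by
  have hn := ne_zero_of_pow_eq_zero_of_pow_pred_ne_zero hxn hx
  have hc0 : c 0 = 0 := coeff_zero_eq_zero_of_isNilpotent hxn hx (hyc ▸ ⟨n, hyn⟩)
  have hyc' : y = ∑ i ∈ Icc 1 (n - 1), c i • x ^ i := by
    refine hyc.trans (sum_subset (fun i hi => ?_) fun i hi hi' => ?_).symm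
    · simp only [mem_Icc, mem_range] at hi ⊢
      omega
    · obtain rfl : i = 0 := by simp only [mem_Icc, mem_range] at hi hi'; omega
      rw [hc0, zero_smul]
  obtain rfl | hn2 : n = 1 ∨ 2 ≤ n := by omega
  · exact ⟨fun _ => 1, one_ne_zero, by simpa using hyc'⟩
  · exact ⟨c, coeff_one_ne_zero_of_pow_ne_zero hxn hn2 (hyc' ▸ hy), hyc'⟩

end PowerSums

theorem AlgHom.apply_mem_adjoin_singleton {K A B : Type*} [CommSemiring K] [Semiring A]
    [Semiring B] [Algebra K A] [Algebra K B] (f : A →ₐ[K] B) {a b : A}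
    (h : a ∈ Algebra.adjoin K {b}) : f a ∈ Algebra.adjoin K {f b} := by
  rw [← AlgHom.map_adjoin_singleton]
  exact Subalgebra.mem_map.mpr ⟨a, h, rfl⟩

theorem mem_adjoin_apply_of_apply_mem_adjoin {K R : Type*} [CommSemiring K] [Semiring R]
    [Algebra K R] {x : R} (hcomm : ∀ a, Commute a x → a ∈ Algebra.adjoin K {x})
    (φ : R ≃ₐ[K] R) (hφ : φ x ∈ Algebra.adjoin K {x}) : x ∈ Algebra.adjoin K {φ x} := by
  have hx : x ∈ Algebra.adjoin K {φ.symm x} := by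
    simpa using (φ.symm : R →ₐ[K] R).apply_mem_adjoin_singleton hφ
  have hsymm : φ.symm x ∈ Algebra.adjoin K {x} := hcomm _ (Algebra.commute_of_mem_adjoin_self hx)
  simpa using (φ : R →ₐ[K] R).apply_mem_adjoin_singleton hsymm

def Units.conjAlgEquiv (K : Type*) {R : Type*} [CommSemiring K] [Semiring R] [Algebra K R]
    (g : Rˣ) : R ≃ₐ[K] R :=
  MulSemiringAction.toAlgEquiv K R (ConjAct.toConjAct g)

@[simp]
theorem Units.conjAlgEquiv_apply (K : Type*) {R : Type*} [CommSemiring K] [Semiring R]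
    [Algebra K R] (g : Rˣ) (a : R) : conjAlgEquiv K g a = g * a * ↑g⁻¹ :=
  ConjAct.units_smul_def _ _

theorem mem_normalizer_matrixCentralizer_iff {K : Type*} [Field K] {n : ℕ}
    {X : Matrix (Fin n) (Fin n) K} {g : (Matrix (Fin n) (Fin n) K)ˣ} :
    g ∈ Subgroup.normalizer (matrixCentralizer X : Set (Matrix (Fin n) (Fin n) K)ˣ) ↔
      ∀ h : (Matrix (Fin n) (Fin n) K)ˣ, Commute (h : Matrix (Fin n) (Fin n) K) X ↔
        Commute (h : Matrix (Fin n) (Fin n) K)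
          ((g : Matrix (Fin n) (Fin n) K) * X * ((g⁻¹ : (Matrix (Fin n) (Fin n) K)ˣ) :
            Matrix (Fin n) (Fin n) K)) := by
  rw [← Subgroup.inv_mem_iff, Subgroup.mem_normalizer_iff]
  refine forall_congr' fun h => iff_congr Iff.rfl ?_
  have hconj : Units.conjAlgEquiv K g ↑(g⁻¹ * h * g⁻¹⁻¹) = h := by
    simp [mul_assoc]
  show Commute _ X ↔ _
  rw [← commute_map_iff (Units.conjAlgEquiv K g).injective, hconj, Units.conjAlgEquiv_apply]

theorem stmt_7_general {K : Type*} [Field K] (n : ℕ)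
    (X : Matrix (Fin n) (Fin n) K) (hXn : X ^ n = 0) (hXreg : X ^ (n - 1) ≠ 0)
    (g : (Matrix (Fin n) (Fin n) K)ˣ) :
    g ∈ Subgroup.normalizer (matrixCentralizer X : Set (Matrix (Fin n) (Fin n) K)ˣ) ↔
      ∃ c : ℕ → K, c 1 ≠ 0 ∧
        (g : Matrix (Fin n) (Fin n) K) * X * ((g⁻¹ : (Matrix (Fin n) (Fin n) K)ˣ) :
            Matrix (Fin n) (Fin n) K) =
          ∑ i ∈ Finset.Icc 1 (n - 1), c i • X ^ i := by
  have hcomm (A : Matrix (Fin n) (Fin n) K) (hA : Commute A X) :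
      ∃ c : ℕ → K, A = ∑ i ∈ range n, c i • X ^ i :=
    Matrix.exists_eq_sum_smul_pow_of_commute (Fintype.card_fin n) hXn hXreg hA
  rw [mem_normalizer_matrixCentralizer_iff, ← Units.conjAlgEquiv_apply K]
  set φ := Units.conjAlgEquiv K g
  constructor
  · intro hnorm
    have hunit : IsUnit (1 + X) := IsNilpotent.isUnit_one_add ⟨n, hXn⟩
    have hXY : Commute X (φ X) := by
      simpa using ((hnorm hunit.unit).mp (by simp)).sub_left (Commute.one_left (φ X))
    obtain ⟨c, hc⟩ := hcomm _ hXY.symm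
    exact exists_coeff_one_ne_zero_of_eq_sum hXn hXreg (by rw [← map_pow, hXn, map_zero])
      (by rwa [← map_pow, map_ne_zero_iff _ φ.injective]) hc
  · rintro ⟨c, -, hc⟩ h
    have hY : φ X ∈ Algebra.adjoin K {X} := hc ▸ sum_smul_pow_mem_adjoin _ _ _
    have hX : X ∈ Algebra.adjoin K {φ X} := by
      refine mem_adjoin_apply_of_apply_mem_adjoin (fun A hA => ?_) φ hY
      obtain ⟨e, rfl⟩ := hcomm A hA
      exact sum_smul_pow_mem_adjoin _ _ _
    exact ⟨Algebra.commute_of_mem_adjoin_singleton_of_commute hY,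
      Algebra.commute_of_mem_adjoin_singleton_of_commute hX⟩

/-- **Characterization of the normalizer of the centralizer of a regular nilpotent matrix.**
Let `X ∈ Mₙ(K)` be regular nilpotent (`Xⁿ = 0`, `X^(n-1) ≠ 0`) and let
`C = {g ∈ GLₙ(K) : gX = Xg}`.  Then `g ∈ GLₙ(K)` normalizes `C` if and only if
`gXg⁻¹ = c₁X + c₂X² + ⋯ + c_{n-1}X^(n-1)` for some `cᵢ ∈ K` with `c₁ ≠ 0`. -/
theorem stmt_7 {K : Type*} [Field K] (n : ℕ) (hn : 1 ≤ n)
    (X : Matrix (Fin n) (Fin n) K) (hXn : X ^ n = 0) (hXreg : X ^ (n - 1) ≠ 0)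
    (g : (Matrix (Fin n) (Fin n) K)ˣ) :
    g ∈ Subgroup.normalizer (matrixCentralizer X : Set (Matrix (Fin n) (Fin n) K)ˣ) ↔
      ∃ c : ℕ → K, c 1 ≠ 0 ∧
        (g : Matrix (Fin n) (Fin n) K) * X * ((g⁻¹ : (Matrix (Fin n) (Fin n) K)ˣ) :
            Matrix (Fin n) (Fin n) K) =
          ∑ i ∈ Finset.Icc 1 (n - 1), c i • X ^ i :=
  stmt_7_general n X hXn hXreg g
end

section
/- Let K be an algebraically closed field, n ≥ 1, and let u ∈ GL_n(K) be unipotent (i.e. u − 1 is nilpotent). If z belongs to the center of the centralizer C = {g ∈ GL_n(K) : gu = ug}, i.e. z ∈ C and z commutes with every element of C, then z has a single eigenvalue: there exists c ∈ Kˣ such that z − c·1 is nilpotent (equivalently, the semisimple part of z is a scalar matrix). -/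
/-!
If `z` had two distinct eigenvalues `μ ≠ ν`, pick a right `μ`-eigenvector `w` and a left
`ν`-eigenvector `f` of `z`, both fixed by `u` (possible because `u - 1` is nilpotent and commutes
with `z`). The rank-one matrix `m = w fᵀ` commutes with `u`, and `f ⬝ᵥ w = 0` forces
`m² = 0`, so `1 + m` is a unit of the centralizer of `u`. Hence `z` commutes with `m`, i.e.
`μ • m = ν • m`, which is absurd. So the spectrum of `z` is a single point `c`, and
Cayley–Hamilton shows that `z - c • 1` is nilpotent.
-/

open Polynomial

theorem Commute.of_mul_self_eq_zero {R : Type*} [Ring R] {u z m : R} (hm : m * m = 0)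
    (hmu : Commute m u) (hcentral : ∀ g : R, IsUnit g → Commute g u → Commute z g) :
    Commute z m := by
  have hunit : IsUnit (1 + m) := IsNilpotent.isUnit_one_add ⟨2, by rw [sq, hm]⟩
  have h := (hcentral (1 + m) hunit ((Commute.one_left u).add_left hmu)).sub_right
    (Commute.one_right z)
  rwa [add_sub_cancel_left] at h

namespace Matrix

variable {n : Type*} [Fintype n]

theorem dotProduct_eq_zero_of_mulVec_eq_smul_of_vecMul_eq_smul {R : Type*} [CommRing R]
    [IsDomain R] {A : Matrix n n R} {μ ν : R} {w f : n → R} (hw : A *ᵥ w = μ • w)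
    (hf : f ᵥ* A = ν • f) (hne : μ ≠ ν) :
    f ⬝ᵥ w = 0 := by
  have h : μ * (f ⬝ᵥ w) = ν * (f ⬝ᵥ w) := by
    rw [← smul_eq_mul, ← dotProduct_smul, ← hw, dotProduct_mulVec, hf, smul_dotProduct,
      smul_eq_mul]
  exact (mul_eq_mul_right_iff.mp h).resolve_left hne

variable [DecidableEq n]

section CommRing

variable {R : Type*} [CommRing R]

theorem exists_mulVec_eq_smul_and_mulVec_eq_zero {A B : Matrix n n R} (hAB : Commute A B)
    (hB : IsNilpotent B) {μ : R} {v : n → R} (hv : v ≠ 0) (hAv : A *ᵥ v = μ • v) :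
    ∃ w ≠ 0, A *ᵥ w = μ • w ∧ B *ᵥ w = 0 := by
  obtain ⟨k, hk⟩ := hB
  have hBkv : B ^ k *ᵥ v = 0 := by rw [hk, zero_mulVec]
  clear hk
  induction k generalizing v with
  | zero => rw [pow_zero, one_mulVec] at hBkv; exact absurd hBkv hv
  | succ k ih =>
    by_cases hBv : B *ᵥ v = 0
    · exact ⟨v, hv, hAv, hBv⟩
    · refine ih hBv ?_ ?_
      · rw [mulVec_mulVec, hAB.eq, ← mulVec_mulVec, hAv, mulVec_smul]
      · rw [mulVec_mulVec, ← pow_succ, hBkv]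

theorem exists_vecMul_eq_smul_and_vecMul_eq_zero {A B : Matrix n n R} (hAB : Commute A B)
    (hB : IsNilpotent B) {μ : R} {v : n → R} (hv : v ≠ 0) (hvA : v ᵥ* A = μ • v) :
    ∃ w ≠ 0, w ᵥ* A = μ • w ∧ w ᵥ* B = 0 := by
  have hABt : Commute Aᵀ Bᵀ := by
    rw [Commute, SemiconjBy, ← transpose_mul, ← transpose_mul, hAB.eq]
  simp only [← mulVec_transpose] at hvA ⊢
  exact exists_mulVec_eq_smul_and_mulVec_eq_zero hABt (isNilpotent_transpose_iff.mpr hB) hv hvA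

end CommRing

variable {K : Type*} [Field K]

theorem exists_mulVec_eq_smul_of_mem_spectrum {A : Matrix n n K} {μ : K}
    (hμ : μ ∈ spectrum K A) : ∃ v ≠ 0, A *ᵥ v = μ • v := by
  rw [spectrum.mem_iff, Algebra.algebraMap_eq_smul_one, isUnit_iff_isUnit_det,
    isUnit_iff_ne_zero, not_not, ← exists_mulVec_eq_zero_iff] at hμ
  obtain ⟨v, hv, hAv⟩ := hμ
  rw [sub_mulVec, smul_mulVec, one_mulVec, sub_eq_zero] at hAv
  exact ⟨v, hv, hAv.symm⟩

theorem exists_vecMul_eq_smul_of_mem_spectrum {A : Matrix n n K} {μ : K}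
    (hμ : μ ∈ spectrum K A) : ∃ v ≠ 0, v ᵥ* A = μ • v := by
  rw [spectrum.mem_iff, Algebra.algebraMap_eq_smul_one, isUnit_iff_isUnit_det,
    isUnit_iff_ne_zero, not_not, ← exists_vecMul_eq_zero_iff] at hμ
  obtain ⟨v, hv, hvA⟩ := hμ
  rw [vecMul_sub, vecMul_smul, vecMul_one, sub_eq_zero] at hvA
  exact ⟨v, hv, hvA.symm⟩

theorem eq_of_mem_spectrum_of_commute_units {u z : Matrix n n K} (hu : IsNilpotent (u - 1))
    (hzu : Commute z u) (hcentral : ∀ g, IsUnit g → Commute g u → Commute z g) {μ ν : K}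
    (hμ : μ ∈ spectrum K z) (hν : ν ∈ spectrum K z) : μ = ν := by
  by_contra hne
  have hzu₁ : Commute z (u - 1) := hzu.sub_right (Commute.one_right z)
  obtain ⟨v, hv, hzv⟩ := exists_mulVec_eq_smul_of_mem_spectrum hμ
  obtain ⟨w, hw, hzw, huw⟩ := exists_mulVec_eq_smul_and_mulVec_eq_zero hzu₁ hu hv hzv
  obtain ⟨e, he, hez⟩ := exists_vecMul_eq_smul_of_mem_spectrum hν
  obtain ⟨f, hf, hfz, hfu⟩ := exists_vecMul_eq_smul_and_vecMul_eq_zero hzu₁ hu he hez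
  rw [sub_mulVec, one_mulVec, sub_eq_zero] at huw
  rw [vecMul_sub, vecMul_one, sub_eq_zero] at hfu
  have hfw := dotProduct_eq_zero_of_mulVec_eq_smul_of_vecMul_eq_smul hzw hfz hne
  have hm_sq : vecMulVec w f * vecMulVec w f = 0 := by
    rw [vecMulVec_mul_vecMulVec, hfw, zero_smul, vecMulVec_zero]
  have hmu : Commute (vecMulVec w f) u := by
    rw [Commute, SemiconjBy, vecMulVec_mul, mul_vecMulVec, huw, hfu]
  have hzm := (Commute.of_mul_self_eq_zero hm_sq hmu hcentral).eq
  rw [mul_vecMulVec, vecMulVec_mul, hzw, hfz, smul_vecMulVec, vecMulVec_smul, ← sub_eq_zero,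
    ← sub_smul, smul_eq_zero, sub_eq_zero] at hzm
  exact hzm.elim hne (vecMulVec_ne_zero hw hf)

theorem charpoly_eq_X_sub_C_pow_of_spectrum_subset [IsAlgClosed K] {A : Matrix n n K} {c : K}
    (h : spectrum K A ⊆ {c}) : A.charpoly = (X - C c) ^ Fintype.card n := by
  have hsplits : A.charpoly.Splits := IsAlgClosed.splits A.charpoly
  have hroots : A.charpoly.roots = Multiset.replicate (Fintype.card n) c := by
    refine Multiset.eq_replicate.mpr ⟨?_, fun μ hμ => h ?_⟩
    · rw [splits_iff_card_roots.mp hsplits, charpoly_natDegree_eq_dim]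
    · exact mem_spectrum_iff_isRoot_charpoly.mpr (isRoot_of_mem_roots hμ)
  rw [hsplits.eq_prod_roots_of_monic A.charpoly_monic, hroots, Multiset.map_replicate,
    Multiset.prod_replicate]

theorem isNilpotent_sub_smul_one_of_spectrum_subset [IsAlgClosed K] {A : Matrix n n K} {c : K}
    (h : spectrum K A ⊆ {c}) : IsNilpotent (A - c • 1) := by
  refine ⟨Fintype.card n, ?_⟩
  have hCH := A.aeval_self_charpoly
  rwa [charpoly_eq_X_sub_C_pow_of_spectrum_subset h, map_pow, map_sub, aeval_X, aeval_C,
    Algebra.algebraMap_eq_smul_one] at hCH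

end Matrix

theorem stmt_8_general {K : Type*} [Field K] [IsAlgClosed K] (n : ℕ) (hn : 1 ≤ n)
    (u : Matrix (Fin n) (Fin n) K) (huni : IsNilpotent (u - 1))
    (z : Matrix (Fin n) (Fin n) K) (hz : IsUnit z) (hzu : z * u = u * z)
    (hcentral : ∀ g : Matrix (Fin n) (Fin n) K, IsUnit g → g * u = u * g → z * g = g * z) :
    ∃ c : K, c ≠ 0 ∧ IsNilpotent (z - c • (1 : Matrix (Fin n) (Fin n) K)) := by
  have : Nonempty (Fin n) := ⟨⟨0, hn⟩⟩
  obtain ⟨c, hc⟩ := spectrum.nonempty_of_isAlgClosed_of_finiteDimensional K z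
  have hspec : spectrum K z ⊆ {c} := fun μ hμ =>
    Matrix.eq_of_mem_spectrum_of_commute_units huni hzu hcentral hμ hc
  exact ⟨c, fun hc0 => spectrum.zero_notMem K hz (hc0 ▸ hc),
    Matrix.isNilpotent_sub_smul_one_of_spectrum_subset hspec⟩

/-- **Central elements of the centralizer of a unipotent matrix have a single eigenvalue.**
Let `K` be an algebraically closed field and `u ∈ GLₙ(K)` unipotent (`u - 1` nilpotent).
If `z` belongs to the center of the centralizer `C = {g ∈ GLₙ(K) : gu = ug}` — i.e.
`z ∈ C` and `z` commutes with every element of `C` — then `z` has a single eigenvalue: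
there is `c ∈ Kˣ` with `z - c·1` nilpotent. -/
theorem stmt_8 {K : Type*} [Field K] [IsAlgClosed K] (n : ℕ) (hn : 1 ≤ n)
    (u : Matrix (Fin n) (Fin n) K) (hu : IsUnit u) (huni : IsNilpotent (u - 1))
    (z : Matrix (Fin n) (Fin n) K) (hz : IsUnit z) (hzu : z * u = u * z)
    (hcentral : ∀ g : Matrix (Fin n) (Fin n) K, IsUnit g → g * u = u * g → z * g = g * z) :
    ∃ c : K, c ≠ 0 ∧ IsNilpotent (z - c • (1 : Matrix (Fin n) (Fin n) K)) :=
  stmt_8_general n hn u huni z hz hzu hcentral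
end

section
/- Let K be a field, n ≥ 1, let X ∈ M_n(K) be nilpotent, and let Y ∈ M_n(K) be diagonalizable over K (i.e. similar over K to a diagonal matrix). If Y commutes with every g ∈ GL_n(K) satisfying gX = Xg, then Y is a scalar matrix. -/
private lemma std_mul_apply {K : Type*} [Field K] {n : ℕ}
    (A B : Matrix (Fin n) (Fin n) K) (i0 j0 i j : Fin n) :
    (A * Matrix.single i0 j0 (1:K) * B) i j = A i i0 * B j0 j := by
  rw [Matrix.mul_apply]
  rw [Finset.sum_eq_single j0]
  · rw [Matrix.mul_apply, Finset.sum_eq_single i0]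
    · simp [Matrix.single]
    · intro b _ hb; simp [Matrix.single, hb.symm]
    · simp
  · intro b _ hb
    rw [Matrix.mul_apply]
    have : ∀ k ∈ Finset.univ, A i k * Matrix.single i0 j0 (1:K) k b = 0 := by
      intro k _; simp [Matrix.single, hb.symm]
    rw [Finset.sum_eq_zero this, zero_mul]
  · simp

/-- **Diagonalizable elements of the center of the centralizer of a nilpotent matrix
are scalar.**  Let `K` be a field, `X ∈ Mₙ(K)` nilpotent, and `Y ∈ Mₙ(K)` diagonalizable
over `K` (similar over `K` to a diagonal matrix).  If `Y` commutes with every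
`g ∈ GLₙ(K)` satisfying `gX = Xg`, then `Y` is a scalar matrix. -/
theorem stmt_9 {K : Type*} [Field K] (n : ℕ) (hn : 1 ≤ n)
    (X : Matrix (Fin n) (Fin n) K) (hX : IsNilpotent X)
    (Y : Matrix (Fin n) (Fin n) K)
    (hYdiag : ∃ (P : (Matrix (Fin n) (Fin n) K)ˣ) (d : Fin n → K),
      Y = (P : Matrix (Fin n) (Fin n) K) * Matrix.diagonal d *
        ((P⁻¹ : (Matrix (Fin n) (Fin n) K)ˣ) : Matrix (Fin n) (Fin n) K))
    (hcomm : ∀ g : Matrix (Fin n) (Fin n) K, IsUnit g → g * X = X * g → Y * g = g * Y) :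
    ∃ c : K, Y = c • (1 : Matrix (Fin n) (Fin n) K) := by
  obtain ⟨P, d, rfl⟩ := hYdiag
  set A : Matrix (Fin n) (Fin n) K := (P : Matrix (Fin n) (Fin n) K) with hA
  set B : Matrix (Fin n) (Fin n) K :=
    ((P⁻¹ : (Matrix (Fin n) (Fin n) K)ˣ) : Matrix (Fin n) (Fin n) K) with hB
  have hAB : A * B = 1 := P.mul_inv
  have hBA : B * A = 1 := P.inv_mul
  set X' : Matrix (Fin n) (Fin n) K := B * X * A with hX'def
  have hpow : ∀ t : ℕ, X' ^ t = B * X ^ t * A := by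
    intro t; induction t with
    | zero => rw [pow_zero, pow_zero, mul_one, hBA]
    | succ t ih =>
        rw [pow_succ, pow_succ, ih, hX'def]
        calc B * X ^ t * A * (B * X * A) = B * X ^ t * (A * B) * X * A := by
              simp only [mul_assoc]
          _ = B * (X ^ t * X) * A := by rw [hAB]; simp only [mul_assoc, one_mul]
  obtain ⟨m, hm⟩ := hX
  have hX'm : X' ^ m = 0 := by rw [hpow, hm, mul_zero, zero_mul]
  -- transfer the commuting hypothesis through the conjugation
  have hcomm' : ∀ g : Matrix (Fin n) (Fin n) K, IsUnit g → g * X' = X' * g →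
      Matrix.diagonal d * g = g * Matrix.diagonal d := by
    intro g hg hgX
    obtain ⟨u, hu⟩ := hg
    have hunit : IsUnit (A * g * B) :=
      ⟨P * u * P⁻¹, by rw [Units.val_mul, Units.val_mul, hu]⟩
    have e1 : B * X = X' * B := by rw [hX'def, mul_assoc, hAB, mul_one]
    have e2 : A * X' = X * A := by
      rw [hX'def, ← mul_assoc, ← mul_assoc, hAB, one_mul]
    have h1 : (A * g * B) * X = X * (A * g * B) := by
      calc (A * g * B) * X = A * g * (B * X) := by rw [mul_assoc]
        _ = A * (g * X') * B := by rw [e1]; simp only [mul_assoc]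
        _ = A * (X' * g) * B := by rw [hgX]
        _ = A * X' * (g * B) := by simp only [mul_assoc]
        _ = X * (A * g * B) := by rw [e2]; simp only [mul_assoc]
    have hYg := hcomm (A * g * B) hunit h1
    have h3 := congrArg (fun M => B * (M * A)) hYg
    simp only [mul_assoc] at h3
    rw [hBA] at h3
    simp only [mul_one] at h3
    rw [show B * (A * g) = g from by rw [← mul_assoc, hBA, one_mul],
        show B * (A * Matrix.diagonal d) = Matrix.diagonal d from by
          rw [← mul_assoc, hBA, one_mul]] at h3
    exact (Units.mul_right_inj P).mp ((Units.mul_right_inj P⁻¹).mp h3)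
  -- the diagonal commutes with X'
  have hDX' : Matrix.diagonal d * X' = X' * Matrix.diagonal d := by
    have hu : IsUnit (1 + X') := IsNilpotent.isUnit_one_add ⟨m, hX'm⟩
    have h := hcomm' (1 + X') hu (by rw [add_mul, mul_add, one_mul, mul_one])
    rw [mul_add, add_mul, mul_one, one_mul] at h
    exact add_left_cancel h
  have hblock : ∀ i j : Fin n, d i ≠ d j → X' i j = 0 := by
    intro i j hij
    have h := congrFun (congrFun hDX' i) j
    rw [Matrix.diagonal_mul, Matrix.mul_diagonal] at h
    have h2 : (d i - d j) * X' i j = 0 := by linear_combination h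
    rcases mul_eq_zero.mp h2 with h3 | h3
    · exact absurd (sub_eq_zero.mp h3) hij
    · exact h3
  have hblockpow : ∀ (t : ℕ) (i j : Fin n), d i ≠ d j → (X' ^ t) i j = 0 := by
    intro t
    induction t with
    | zero =>
        intro i j hij
        have : i ≠ j := fun h => hij (by rw [h])
        simp [Matrix.one_apply, this]
    | succ t ih =>
        intro i j hij
        rw [pow_succ, Matrix.mul_apply]
        apply Finset.sum_eq_zero
        intro k _
        by_cases hk : d i = d k
        · rw [hblock k j (hk ▸ hij), mul_zero]
        · rw [ih i k hk, zero_mul]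
  -- it suffices to show d is constant
  suffices hconst : ∀ i j : Fin n, d i = d j by
    refine ⟨d ⟨0, hn⟩, ?_⟩
    have hd : Matrix.diagonal d = (d ⟨0, hn⟩) • (1 : Matrix (Fin n) (Fin n) K) := by
      ext i j
      by_cases h : i = j
      · subst h; simp [Matrix.diagonal_apply_eq, Matrix.one_apply, hconst i ⟨0, hn⟩]
      · simp [Matrix.diagonal_apply_ne _ h, Matrix.one_apply, h]
    rw [hd, Matrix.mul_smul, Matrix.smul_mul, mul_one, hAB]
  intro i0 j0
  by_contra hne
  -- a maximal nonzero "column" vector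
  have ht : ∃ t : ℕ, (∃ k, (X' ^ t) k i0 ≠ 0) ∧ ¬ (∃ k, (X' ^ (t+1)) k i0 ≠ 0) := by
    by_contra hc
    push_neg at hc
    have hall : ∀ t : ℕ, ∃ k, (X' ^ t) k i0 ≠ 0 := by
      intro t
      induction t with
      | zero => exact ⟨i0, by simp⟩
      | succ t ih => exact hc t ih
    obtain ⟨k, hk⟩ := hall m
    exact hk (by rw [hX'm]; rfl)
  obtain ⟨t, ⟨k0, hk0⟩, ht1⟩ := ht
  push_neg at ht1
  -- a maximal nonzero "row" vector
  have hs : ∃ s : ℕ, (∃ l, (X' ^ s) j0 l ≠ 0) ∧ ¬ (∃ l, (X' ^ (s+1)) j0 l ≠ 0) := by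
    by_contra hc
    push_neg at hc
    have hall : ∀ s : ℕ, ∃ l, (X' ^ s) j0 l ≠ 0 := by
      intro s
      induction s with
      | zero => exact ⟨j0, by simp⟩
      | succ s ih => exact hc s ih
    obtain ⟨l, hl⟩ := hall m
    exact hl (by rw [hX'm]; rfl)
  obtain ⟨s, ⟨l0, hl0⟩, hs1⟩ := hs
  push_neg at hs1
  set N : Matrix (Fin n) (Fin n) K :=
    X' ^ t * Matrix.single i0 j0 (1:K) * X' ^ s with hNdef
  have hNapply : ∀ i j, N i j = (X' ^ t) i i0 * (X' ^ s) j0 j := by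
    intro i j; rw [hNdef]; exact std_mul_apply _ _ _ _ _ _
  have hXN : X' * N = 0 := by
    have : X' * N = X' ^ (t+1) * Matrix.single i0 j0 (1:K) * X' ^ s := by
      rw [hNdef, pow_succ']; simp only [mul_assoc]
    rw [this]
    ext i j
    rw [std_mul_apply, ht1 i, zero_mul, Matrix.zero_apply]
  have hNX : N * X' = 0 := by
    have : N * X' = X' ^ t * Matrix.single i0 j0 (1:K) * X' ^ (s+1) := by
      rw [hNdef, pow_succ]; simp only [mul_assoc]
    rw [this]
    ext i j
    rw [std_mul_apply, hs1 j, mul_zero, Matrix.zero_apply]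
  have hNN : N * N = 0 := by
    ext i j
    rw [Matrix.mul_apply, Matrix.zero_apply]
    have hterm : ∀ k, N i k * N k j
        = ((X' ^ t) i i0 * (X' ^ s) j0 j) * ((X' ^ s) j0 k * (X' ^ t) k i0) := by
      intro k; rw [hNapply, hNapply]; ring
    calc ∑ k, N i k * N k j
        = ∑ k, ((X' ^ t) i i0 * (X' ^ s) j0 j) * ((X' ^ s) j0 k * (X' ^ t) k i0) := by
          exact Finset.sum_congr rfl fun k _ => hterm k
      _ = ((X' ^ t) i i0 * (X' ^ s) j0 j) * ∑ k, (X' ^ s) j0 k * (X' ^ t) k i0 := by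
          rw [Finset.mul_sum]
      _ = ((X' ^ t) i i0 * (X' ^ s) j0 j) * (X' ^ (s + t)) j0 i0 := by
          rw [pow_add, Matrix.mul_apply]
      _ = 0 := by rw [hblockpow (s + t) j0 i0 (fun h => hne h.symm), mul_zero]
  have hNnil : IsNilpotent N := ⟨2, by rw [pow_two]; exact hNN⟩
  have hgX : (1 + N) * X' = X' * (1 + N) := by
    rw [add_mul, mul_add, one_mul, mul_one, hNX, hXN]
  have hDg := hcomm' (1 + N) hNnil.isUnit_one_add hgX
  have hDN : Matrix.diagonal d * N = N * Matrix.diagonal d := by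
    rw [mul_add, add_mul, mul_one, one_mul] at hDg
    exact add_left_cancel hDg
  have h := congrFun (congrFun hDN k0) l0
  rw [Matrix.diagonal_mul, Matrix.mul_diagonal, hNapply] at h
  have hdk0 : d k0 = d i0 := by
    by_contra hc; exact hk0 (hblockpow t k0 i0 hc)
  have hdl0 : d l0 = d j0 := by
    by_contra hc; exact hl0 (hblockpow s j0 l0 (fun hh => hc hh.symm))
  have hnz : (X' ^ t) k0 i0 * (X' ^ s) j0 l0 ≠ 0 := mul_ne_zero hk0 hl0
  have h2 : (d k0 - d l0) * ((X' ^ t) k0 i0 * (X' ^ s) j0 l0) = 0 := by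
    linear_combination h
  rcases mul_eq_zero.mp h2 with h3 | h3
  · exact hne (by rw [← hdk0, sub_eq_zero.mp h3, hdl0])
  · exact hnz h3
end
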